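/- arXiv:1601.04632 — 3 statements merged into one kernel-verified Lean document; each statement's English description precedes it below -/
import Mathlib

section
/- Let ν ≥ 1 be an integer. For every integer n ≥ 1 and every β = (β₁,…,βₙ) ∈ ℕⁿ there exists a subset I ⊆ {1,…,n} such that: (i) |I| ≤ 2^{ν−1} − 1; (ii) β_j ≠ 0 for all j ∈ I; and (iii) for every J ⊆ {1,…,n} with J ∩ I = ∅ and |J| ≤ |I| + 1, one has ν·Σ_{j∈J} β_j ≤ Σ_{j=1}^n β_j. -/
/-!
Grow `I` greedily from `∅`: as long as some `J` disjoint from `I` with `|J| ≤ |I| + 1` carries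
more than a `1/ν`-th of the total mass, replace `I` by `I ∪ J`, which at most doubles `|I| + 1`.
The sets `J` found along the way are pairwise disjoint, so there cannot be `ν` of them; hence the
process stops within `ν - 1` steps at a set with `|I| + 1 ≤ 2^(ν-1)`. Zero entries can then be
dropped from `I`, since moving them out of `I` changes no sum.
-/

open Finset

variable {ι : Type*} [Fintype ι] [DecidableEq ι]

def CapturesHeavy (ν : ℕ) (β : ι → ℕ) (I : Finset ι) : Prop :=
  ∀ J : Finset ι, Disjoint J I → #J ≤ #I + 1 → ν * ∑ j ∈ J, β j ≤ ∑ j, β j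

theorem CapturesHeavy.filter_ne_zero {ν : ℕ} {β : ι → ℕ} {I : Finset ι}
    (hI : CapturesHeavy ν β I) : CapturesHeavy ν β (I.filter (β · ≠ 0)) := by
  intro J hJ hcard
  have hsum : ∑ j ∈ J \ I, β j = ∑ j ∈ J, β j := by
    refine sum_subset sdiff_subset fun j hjJ hjI => ?_
    by_contra hne
    exact disjoint_left.mp hJ hjJ (mem_filter.mpr ⟨by simpa [hjJ] using hjI, hne⟩)
  have hcard' : #(J \ I) ≤ #I + 1 :=
    (card_le_card sdiff_subset).trans (hcard.trans (by grw [card_filter_le]))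
  rw [← hsum]
  exact hI _ sdiff_disjoint hcard'

theorem exists_capturesHeavy_or_exists_heavy (ν : ℕ) (β : ι → ℕ) (i : ℕ) :
    (∃ I : Finset ι, 2 * (#I + 1) ≤ 2 ^ i ∧ CapturesHeavy ν β I) ∨
      ∃ I : Finset ι, #I + 1 ≤ 2 ^ i ∧ i * (∑ j, β j + 1) ≤ ν * ∑ j ∈ I, β j := by
  induction i with
  | zero => exact Or.inr ⟨∅, by simp⟩
  | succ i ih =>
    rcases ih with ⟨I, hcard, hI⟩ | ⟨I, hcard, hmass⟩
    · exact Or.inl ⟨I, hcard.trans (Nat.pow_le_pow_right two_pos i.le_succ), hI⟩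
    by_cases hI : CapturesHeavy ν β I
    · exact Or.inl ⟨I, by rw [pow_succ]; omega, hI⟩
    obtain ⟨J, hJI, hJcard, hJmass⟩ : ∃ J : Finset ι, Disjoint J I ∧ #J ≤ #I + 1 ∧
        ∑ j, β j < ν * ∑ j ∈ J, β j := by
      simpa [CapturesHeavy] using hI
    refine Or.inr ⟨I ∪ J, ?_, ?_⟩
    · rw [card_union_of_disjoint hJI.symm, pow_succ]
      omega
    · rw [sum_union hJI.symm]
      linarith

theorem exists_capturesHeavy (ν : ℕ) (hν : 1 ≤ ν) (β : ι → ℕ) :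
    ∃ I : Finset ι, #I + 1 ≤ 2 ^ (ν - 1) ∧ CapturesHeavy ν β I := by
  obtain ⟨I, hcard, hI⟩ | ⟨I, -, hmass⟩ := exists_capturesHeavy_or_exists_heavy ν β ν
  · refine ⟨I, ?_, hI⟩
    rw [← Nat.sub_add_cancel hν, pow_succ] at hcard
    omega
  · have : ν * ∑ j ∈ I, β j ≤ ν * ∑ j, β j := by grw [sum_le_univ_sum_of_nonneg (by simp)]
    nlinarith

theorem stmt2_general (ν : ℕ) (hν : 1 ≤ ν) (n : ℕ) (β : Fin n → ℕ) :
    ∃ I : Finset (Fin n),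
      I.card ≤ 2 ^ (ν - 1) - 1 ∧
      (∀ j ∈ I, β j ≠ 0) ∧
      ∀ J : Finset (Fin n), Disjoint J I → J.card ≤ I.card + 1 →
        ν * ∑ j ∈ J, β j ≤ ∑ j, β j := by
  obtain ⟨I, hcard, hI⟩ := exists_capturesHeavy ν hν β
  refine ⟨I.filter (β · ≠ 0), ?_, fun j hj => (mem_filter.mp hj).2, hI.filter_ne_zero⟩
  have := card_filter_le I (β · ≠ 0)
  omega

/-- Combinatorial selection lemma: for `ν ≥ 1` and any `β ∈ ℕⁿ` there is a set
`I ⊆ {1,…,n}` with `|I| ≤ 2^{ν−1} − 1`, `β_j ≠ 0` on `I`, and such that every `J`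
disjoint from `I` with `|J| ≤ |I| + 1` satisfies `ν·Σ_{j∈J} β_j ≤ Σ_j β_j`. -/
theorem stmt2 (ν : ℕ) (hν : 1 ≤ ν) (n : ℕ) (hn : 1 ≤ n) (β : Fin n → ℕ) :
    ∃ I : Finset (Fin n),
      I.card ≤ 2 ^ (ν - 1) - 1 ∧
      (∀ j ∈ I, β j ≠ 0) ∧
      ∀ J : Finset (Fin n), Disjoint J I → J.card ≤ I.card + 1 →
        ν * ∑ j ∈ J, β j ≤ ∑ j, β j :=
  stmt2_general ν hν n β
end

section
/- Let (X,d) be a metric space and μ a Borel measure on X such that every ball has finite measure V(x,r) = μ(B(x,r)), satisfying the doubling condition V(x,λr) ≤ C'(1+λ)^Q V(x,r) for all x, λ,r ≥ 0. Let 1 ≤ p < q ≤ ∞ and a,b ≥ 0 with b > a + Q(1/p − 1/q). Then there is a constant C (depending only on p,q,a,b,Q,C') such that for every measurable kernel K : X×X → ℂ one has ⦀K⦀_{p,a} ≤ C·⦀K⦀_{q,b}. -/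
/-!
Fix `y` and write `w(x) = 1 + d(x, y)`. Splitting `w^a = w^(a-b) · w^b` and applying Hölder's
inequality with `1/p = 1/q + u`, `u = 1/p - 1/q`, bounds the `L^p` norm of `K(·,y) w^a` by the
`L^q` norm of `K(·,y) w^b` times `‖w^(a-b)‖_{1/u} = (∫ w^(-s))^u`, where `s = (b - a)/u > Q`.
Covering `X` by the dyadic balls `B(y, 2^(n+1))`, on which `w ≥ 2^n`, the doubling condition
gives `∫ w^(-s) ≤ D · V(y,1)` with `D = C' 4^Q ∑ₙ 2^((Q-s)n) < ∞`. The powers of `V(y,1)` then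
combine as `V^(1-1/p) · V^u = V^(1-1/q)`.
-/

open MeasureTheory Metric ENNReal

/-- Weighted mixed norm for `ℝ≥0∞`-valued kernels:
`⦀K⦀_{p,s} = ess sup_y V(y,1)^{1/p'} ‖K(·,y)(1+d(·,y))^s‖_{L^p}`. -/
noncomputable def kNormE {X : Type} [MetricSpace X] [MeasurableSpace X] (μ : Measure X)
    (p : ℝ≥0∞) (s : ℝ) (K : X → X → ℝ≥0∞) : ℝ≥0∞ :=
  essSup (fun y => (μ (ball y 1)) ^ ((1 - p⁻¹).toReal) *
    (if p = ∞ then essSup (fun x => K x y * ENNReal.ofReal ((1 + dist x y) ^ s)) μ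
     else (∫⁻ x, (K x y * ENNReal.ofReal ((1 + dist x y) ^ s)) ^ p.toReal ∂μ) ^ (1 / p.toReal))) μ

/-- Weighted mixed norm `⦀K⦀_{p,s}` for complex-valued kernels. -/
noncomputable def kNorm {X : Type} [MetricSpace X] [MeasurableSpace X] (μ : Measure X)
    (p : ℝ≥0∞) (s : ℝ) (K : X → X → ℂ) : ℝ≥0∞ :=
  kNormE μ p s (fun x y => (‖K x y‖₊ : ℝ≥0∞))

lemma two_pow_rpow_neg_mul_one_add_two_pow_succ_rpow_le {Q : ℝ} (hQ : 0 ≤ Q) (s : ℝ) (n : ℕ) :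
    ((2 : ℝ) ^ n) ^ (-s) * (1 + 2 ^ (n + 1)) ^ Q ≤ 4 ^ Q * ((2 : ℝ) ^ (Q - s)) ^ n := by
  have h2n : (0 : ℝ) < 2 ^ n := by positivity
  calc ((2 : ℝ) ^ n) ^ (-s) * (1 + 2 ^ (n + 1)) ^ Q
      ≤ ((2 : ℝ) ^ n) ^ (-s) * (4 * 2 ^ n) ^ Q := by
        gcongr
        have : (1 : ℝ) ≤ 2 ^ n := one_le_pow₀ one_le_two
        rw [pow_succ]; linarith
    _ = 4 ^ Q * ((2 : ℝ) ^ (Q - s)) ^ n := by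
        rw [Real.mul_rpow (by norm_num) h2n.le, Real.rpow_pow_comm zero_le_two,
          sub_eq_add_neg, Real.rpow_add h2n]
        ring

/-- `C' 4^Q ∑ₙ (2^(Q-s))^n`, the bound on `∫ (1 + d(·,y))^(-s)` in units of `V(y,1)`. -/
noncomputable def weightIntegralConst (C' Q s : ℝ) : ℝ≥0∞ :=
  ENNReal.ofReal (C' * 4 ^ Q) * (1 - ENNReal.ofReal (2 ^ (Q - s)))⁻¹

lemma weightIntegralConst_ne_top (C' : ℝ) {Q s : ℝ} (h : Q < s) :
    weightIntegralConst C' Q s ≠ ∞ := by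
  have hlt : ENNReal.ofReal (2 ^ (Q - s)) < 1 := by
    rw [ENNReal.ofReal_lt_one]
    exact Real.rpow_lt_one_of_one_lt_of_neg one_lt_two (by linarith)
  exact mul_ne_top ofReal_ne_top (inv_ne_top.2 (tsub_pos_of_lt hlt).ne')

lemma toReal_one_sub_inv_add_toReal_inv_sub_inv {p q : ℝ≥0∞} (hp : 1 ≤ p) (hpq : p ≤ q) :
    (1 - p⁻¹).toReal + (p⁻¹ - q⁻¹).toReal = (1 - q⁻¹).toReal := by
  rw [← ENNReal.toReal_add (by finiteness) (by finiteness),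
    tsub_add_tsub_cancel (ENNReal.inv_le_one.2 hp) (ENNReal.inv_le_inv.2 hpq)]

lemma ofReal_one_add_dist_rpow_neg_le_tsum {X : Type} [MetricSpace X] {s : ℝ} (hs : 0 ≤ s)
    (x y : X) :
    ENNReal.ofReal ((1 + dist x y) ^ (-s)) ≤
      ∑' n : ℕ, (ball y (2 ^ (n + 1))).indicator
        (fun _ => ENNReal.ofReal (((2 : ℝ) ^ n) ^ (-s))) x := by
  obtain ⟨n, hle, hlt⟩ := exists_nat_pow_near
    (by linarith [dist_nonneg (x := x) (y := y)] : (1 : ℝ) ≤ 1 + dist x y) one_lt_two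
  have hx : x ∈ ball y (2 ^ (n + 1)) := by rw [mem_ball]; linarith
  refine le_trans ?_ (ENNReal.le_tsum n)
  rw [Set.indicator_of_mem hx]
  exact ENNReal.ofReal_le_ofReal
    (Real.rpow_le_rpow_of_nonpos (by positivity) hle (neg_nonpos.2 hs))

section

variable {X : Type} [MetricSpace X] [MeasurableSpace X] {μ : Measure X}

lemma kNorm_eq_essSup_eLpNorm {p : ℝ≥0∞} (hp : p ≠ 0) (s : ℝ) (K : X → X → ℂ) :
    kNorm μ p s K = essSup (fun y => μ (ball y 1) ^ (1 - p⁻¹).toReal *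
      eLpNorm (fun x => (1 + dist x y) ^ s • K x y) p μ) μ := by
  have henorm : ∀ x y, ‖(1 + dist x y) ^ s • K x y‖ₑ =
      (‖K x y‖₊ : ℝ≥0∞) * ENNReal.ofReal ((1 + dist x y) ^ s) := fun x y => by
    rw [enorm_smul, Real.enorm_of_nonneg (by positivity), mul_comm, enorm_eq_nnnorm]
  unfold kNorm kNormE
  congr 1; funext y; congr 1
  split_ifs with htop
  · simp only [htop, eLpNorm_exponent_top, eLpNormEssSup, henorm]
  · simp only [eLpNorm_eq_lintegral_rpow_enorm_toReal hp htop, henorm]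

variable [OpensMeasurableSpace X]

lemma lintegral_one_add_dist_rpow_neg_le {C' Q s : ℝ} (hQ : 0 ≤ Q) (hs : Q < s) {y : X}
    (hgrowth : ∀ R : ℝ, 0 ≤ R →
      μ (ball y R) ≤ ENNReal.ofReal (C' * (1 + R) ^ Q) * μ (ball y 1)) :
    ∫⁻ x, ENNReal.ofReal ((1 + dist x y) ^ (-s)) ∂μ ≤
      weightIntegralConst C' Q s * μ (ball y 1) := by
  have hterm : ∀ n : ℕ, ENNReal.ofReal (((2 : ℝ) ^ n) ^ (-s)) * μ (ball y (2 ^ (n + 1))) ≤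
      ENNReal.ofReal (C' * 4 ^ Q) * ENNReal.ofReal (2 ^ (Q - s)) ^ n * μ (ball y 1) := fun n => by
    calc ENNReal.ofReal (((2 : ℝ) ^ n) ^ (-s)) * μ (ball y (2 ^ (n + 1)))
        ≤ ENNReal.ofReal (((2 : ℝ) ^ n) ^ (-s)) *
            (ENNReal.ofReal (C' * (1 + 2 ^ (n + 1)) ^ Q) * μ (ball y 1)) := by
          gcongr; exact hgrowth _ (by positivity)
      _ = ENNReal.ofReal C' * ENNReal.ofReal (((2 : ℝ) ^ n) ^ (-s) * (1 + 2 ^ (n + 1)) ^ Q)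
            * μ (ball y 1) := by
          rw [ENNReal.ofReal_mul' (by positivity), ENNReal.ofReal_mul (by positivity)]
          ring
      _ ≤ ENNReal.ofReal C' * ENNReal.ofReal (4 ^ Q * ((2 : ℝ) ^ (Q - s)) ^ n)
            * μ (ball y 1) := by
          gcongr _ * ENNReal.ofReal ?_ * _
          exact two_pow_rpow_neg_mul_one_add_two_pow_succ_rpow_le hQ s n
      _ = ENNReal.ofReal (C' * 4 ^ Q) * ENNReal.ofReal (2 ^ (Q - s)) ^ n * μ (ball y 1) := by
          rw [ENNReal.ofReal_mul' (by positivity : (0 : ℝ) ≤ 4 ^ Q),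
            ENNReal.ofReal_mul (by positivity : (0 : ℝ) ≤ 4 ^ Q),
            ENNReal.ofReal_pow (by positivity)]
          ring
  calc ∫⁻ x, ENNReal.ofReal ((1 + dist x y) ^ (-s)) ∂μ
      ≤ ∫⁻ x, ∑' n : ℕ, (ball y (2 ^ (n + 1))).indicator
          (fun _ => ENNReal.ofReal (((2 : ℝ) ^ n) ^ (-s))) x ∂μ :=
        lintegral_mono fun x => ofReal_one_add_dist_rpow_neg_le_tsum (hQ.trans hs.le) x y
    _ = ∑' n : ℕ, ENNReal.ofReal (((2 : ℝ) ^ n) ^ (-s)) * μ (ball y (2 ^ (n + 1))) := by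
        rw [lintegral_tsum fun n => (measurable_const.indicator measurableSet_ball).aemeasurable]
        simp only [lintegral_indicator_const measurableSet_ball]
    _ ≤ ∑' n : ℕ, ENNReal.ofReal (C' * 4 ^ Q) * ENNReal.ofReal (2 ^ (Q - s)) ^ n
          * μ (ball y 1) :=
        ENNReal.tsum_le_tsum hterm
    _ = weightIntegralConst C' Q s * μ (ball y 1) := by
        rw [ENNReal.tsum_mul_right, ENNReal.tsum_mul_left, ENNReal.tsum_geometric,
          weightIntegralConst]

lemma eLpNorm_one_add_dist_rpow_neg_le {C' Q t : ℝ} {u : ℝ≥0∞} (hu0 : u ≠ 0) (hu : u ≠ ∞)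
    (hQ : 0 ≤ Q) (ht : Q < t / u.toReal) {y : X}
    (hgrowth : ∀ R : ℝ, 0 ≤ R →
      μ (ball y R) ≤ ENNReal.ofReal (C' * (1 + R) ^ Q) * μ (ball y 1)) :
    eLpNorm (fun x => (1 + dist x y) ^ (-t)) u⁻¹ μ ≤
      (weightIntegralConst C' Q (t / u.toReal) * μ (ball y 1)) ^ u.toReal := by
  rw [eLpNorm_eq_lintegral_rpow_enorm_toReal (ENNReal.inv_ne_zero.2 hu)
    (ENNReal.inv_ne_top.2 hu0), ENNReal.toReal_inv, one_div, inv_inv]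
  gcongr
  calc ∫⁻ x, ‖(1 + dist x y) ^ (-t)‖ₑ ^ u.toReal⁻¹ ∂μ
      = ∫⁻ x, ENNReal.ofReal ((1 + dist x y) ^ (-(t / u.toReal))) ∂μ := by
        congr 1; funext x
        have hx : 0 ≤ 1 + dist x y := by positivity
        rw [Real.enorm_of_nonneg (by positivity), ENNReal.ofReal_rpow_of_nonneg (by positivity)
          (by positivity), ← Real.rpow_mul hx, neg_mul, div_eq_mul_inv]
    _ ≤ weightIntegralConst C' Q (t / u.toReal) * μ (ball y 1) :=
        lintegral_one_add_dist_rpow_neg_le hQ ht hgrowth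

lemma eLpNorm_one_add_dist_rpow_smul_le {E : Type*} [NormedAddCommGroup E] [NormedSpace ℝ E]
    {p q r : ℝ≥0∞} [HolderTriple r q p] {f : X → E} (hf : AEStronglyMeasurable f μ)
    (y : X) (a b : ℝ) :
    eLpNorm (fun x => (1 + dist x y) ^ a • f x) p μ ≤
      eLpNorm (fun x => (1 + dist x y) ^ (a - b)) r μ *
        eLpNorm (fun x => (1 + dist x y) ^ b • f x) q μ := by
  have hweight : ∀ c : ℝ, AEStronglyMeasurable (fun x => (1 + dist x y) ^ c) μ := fun c =>
    (by fun_prop : Measurable fun x => (1 + dist x y) ^ c).aestronglyMeasurable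
  have hsplit : (fun x => (1 + dist x y) ^ a • f x) =
      (fun x => (1 + dist x y) ^ (a - b)) • fun x => (1 + dist x y) ^ b • f x := by
    funext x
    rw [Pi.smul_apply', smul_smul, ← Real.rpow_add (by positivity), sub_add_cancel]
  rw [hsplit]
  exact eLpNorm_smul_le_mul_eLpNorm ((hweight b).smul hf) (hweight (a - b))

lemma measure_ball_rpow_mul_eLpNorm_one_add_dist_smul_le {E : Type*} [NormedAddCommGroup E]
    [NormedSpace ℝ E] {p q : ℝ≥0∞} (hp : 1 ≤ p) (hpq : p < q) {a b C' Q : ℝ} (hQ : 0 ≤ Q)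
    (hs : Q < (b - a) / (p⁻¹ - q⁻¹).toReal) {y : X}
    (hgrowth : ∀ R : ℝ, 0 ≤ R →
      μ (ball y R) ≤ ENNReal.ofReal (C' * (1 + R) ^ Q) * μ (ball y 1))
    {f : X → E} (hf : AEStronglyMeasurable f μ) :
    μ (ball y 1) ^ (1 - p⁻¹).toReal * eLpNorm (fun x => (1 + dist x y) ^ a • f x) p μ ≤
      weightIntegralConst C' Q ((b - a) / (p⁻¹ - q⁻¹).toReal) ^ (p⁻¹ - q⁻¹).toReal *
        (μ (ball y 1) ^ (1 - q⁻¹).toReal * eLpNorm (fun x => (1 + dist x y) ^ b • f x) q μ) := by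
  have hqp : q⁻¹ < p⁻¹ := ENNReal.inv_lt_inv.2 hpq
  have : HolderTriple (p⁻¹ - q⁻¹)⁻¹ q p := ⟨by rw [inv_inv, tsub_add_cancel_of_le hqp.le]⟩
  set D := weightIntegralConst C' Q ((b - a) / (p⁻¹ - q⁻¹).toReal)
  set V := μ (ball y 1)
  calc V ^ (1 - p⁻¹).toReal * eLpNorm (fun x => (1 + dist x y) ^ a • f x) p μ
      ≤ V ^ (1 - p⁻¹).toReal * (eLpNorm (fun x => (1 + dist x y) ^ (a - b)) (p⁻¹ - q⁻¹)⁻¹ μ *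
          eLpNorm (fun x => (1 + dist x y) ^ b • f x) q μ) := by
        gcongr
        exact eLpNorm_one_add_dist_rpow_smul_le hf y a b
    _ ≤ V ^ (1 - p⁻¹).toReal * ((D * V) ^ (p⁻¹ - q⁻¹).toReal *
          eLpNorm (fun x => (1 + dist x y) ^ b • f x) q μ) := by
        gcongr
        rw [← neg_sub b a]
        exact eLpNorm_one_add_dist_rpow_neg_le (tsub_pos_of_lt hqp).ne' (by finiteness) hQ hs
          hgrowth
    _ = D ^ (p⁻¹ - q⁻¹).toReal * (V ^ (1 - q⁻¹).toReal *
          eLpNorm (fun x => (1 + dist x y) ^ b • f x) q μ) := by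
        rw [ENNReal.mul_rpow_of_nonneg _ _ ENNReal.toReal_nonneg,
          ← toReal_one_sub_inv_add_toReal_inv_sub_inv hp hpq.le,
          ENNReal.rpow_add_of_nonneg _ _ ENNReal.toReal_nonneg ENNReal.toReal_nonneg]
        ring

end

theorem stmt4_general (p q : ℝ≥0∞) (a b Q C' : ℝ) (hp : 1 ≤ p) (hpq : p < q)
    (hab : a + Q * ((p⁻¹).toReal - (q⁻¹).toReal) < b)
    (hQ : 0 < Q) :
    ∃ C : ℝ, 0 ≤ C ∧
      ∀ (X : Type) [MetricSpace X] [MeasurableSpace X] [BorelSpace X] (μ : Measure X),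
        (∀ (x : X) (r : ℝ), μ (ball x r) < ∞) →
        (∀ (x : X) (lam r : ℝ), 0 ≤ lam → 0 ≤ r →
          μ (ball x (lam * r)) ≤ ENNReal.ofReal (C' * (1 + lam) ^ Q) * μ (ball x r)) →
        ∀ K : X → X → ℂ, Measurable (Function.uncurry K) →
          kNorm μ p a K ≤ ENNReal.ofReal C * kNorm μ q b K := by
  have hqp : q⁻¹ < p⁻¹ := ENNReal.inv_lt_inv.2 hpq
  set u := (p⁻¹ - q⁻¹).toReal
  have hs : Q < (b - a) / u := by
    rw [lt_div_iff₀ (ENNReal.toReal_pos (tsub_pos_of_lt hqp).ne' (by finiteness)),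
      ENNReal.toReal_sub_of_le hqp.le (by finiteness)]
    linarith
  have hDu : weightIntegralConst C' Q ((b - a) / u) ^ u ≠ ∞ :=
    rpow_ne_top_of_nonneg ENNReal.toReal_nonneg (weightIntegralConst_ne_top C' hs)
  refine ⟨(weightIntegralConst C' Q ((b - a) / u) ^ u).toReal, ENNReal.toReal_nonneg,
    fun X _ _ _ μ _ hdoub K hK => ?_⟩
  rw [ENNReal.ofReal_toReal hDu, kNorm_eq_essSup_eLpNorm (zero_lt_one.trans_le hp).ne',
    kNorm_eq_essSup_eLpNorm (zero_lt_one.trans_le (hp.trans hpq.le)).ne', ← essSup_const_mul]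
  exact essSup_mono_ae <| .of_forall fun y =>
    measure_ball_rpow_mul_eLpNorm_one_add_dist_smul_le hp hpq hQ.le hs
      (fun R hR => by simpa using hdoub y R 1 hR zero_le_one)
      hK.of_uncurry_right.aestronglyMeasurable

/-- Hölder-type comparison of weighted kernel norms on a doubling space:
for `1 ≤ p < q ≤ ∞` and `b > a + Q(1/p − 1/q)`, `⦀K⦀_{p,a} ≤ C ⦀K⦀_{q,b}`,
with `C` depending only on `p, q, a, b, Q, C'`. -/
theorem stmt4 (p q : ℝ≥0∞) (a b Q C' : ℝ) (hp : 1 ≤ p) (hpq : p < q)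
    (ha : 0 ≤ a) (hb : 0 ≤ b)
    (hab : a + Q * ((p⁻¹).toReal - (q⁻¹).toReal) < b)
    (hQ : 0 < Q) (hC' : 0 < C') :
    ∃ C : ℝ, 0 ≤ C ∧
      ∀ (X : Type) [MetricSpace X] [MeasurableSpace X] [BorelSpace X] (μ : Measure X),
        (∀ (x : X) (r : ℝ), μ (ball x r) < ∞) →
        (∀ (x : X) (lam r : ℝ), 0 ≤ lam → 0 ≤ r →
          μ (ball x (lam * r)) ≤ ENNReal.ofReal (C' * (1 + lam) ^ Q) * μ (ball x r)) →
        ∀ K : X → X → ℂ, Measurable (Function.uncurry K) →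
          kNorm μ p a K ≤ ENNReal.ofReal C * kNorm μ q b K :=
  stmt4_general p q a b Q C' hp hpq hab hQ
end

section
/- Let (X,d) be a metric space and μ a Borel measure on X such that every ball has finite measure. Let K : X×X → ℂ be a measurable kernel and κ ≥ 0 be such that ⦀K⦀_{1,0} ≤ κ, ⦀K^*⦀_{1,0} ≤ κ, and ⦀K⦀_{2,0} ≤ κ, where K^*(x,y) = conj(K(y,x)). Define the convolution powers K^{∗1} = K and K^{∗(n+1)} = K^{∗n} ∗ K, where (H∗K)(x,y) = ∫_X H(x,z)K(z,y) dμ(z). Then for every n ≥ 1 one has ⦀K^{∗n}⦀_{2,0} ≤ κⁿ, and consequently Σ_{n≥1} ⦀K^{∗n}⦀_{2,0}/n! ≤ e^κ − 1. -/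
open MeasureTheory Metric ENNReal

/-- Kernel convolution `(H∗K)(x,y) = ∫ H(x,z) K(z,y) dμ(z)`. -/
noncomputable def kConv {X : Type} [MeasurableSpace X] (μ : Measure X)
    (H K : X → X → ℂ) : X → X → ℂ :=
  fun x y => ∫ z, H x z * K z y ∂μ

/-- Convolution powers: `convPow μ K n = K^{∗(n+1)}`, i.e. `K^{∗1} = K` and
`K^{∗(n+1)} = K^{∗n} ∗ K`. -/
noncomputable def convPow {X : Type} [MeasurableSpace X] (μ : Measure X)
    (K : X → X → ℂ) : ℕ → X → X → ℂ
  | 0 => K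
  | n + 1 => kConv μ (convPow μ K n) K

/-!
The modulus of `K^{∗n}` is dominated pointwise by the `n`-th convolution power of `|K|`. By Schur's
test, the row and column bounds `⦀K^*⦀_{1,0}, ⦀K⦀_{1,0} ≤ κ` make left convolution with `|K|` an
operator of norm at most `κ` on `L²`. Convolution of nonnegative kernels is associative (Tonelli),
so the `y`-th column of `|K|^{∗(n+1)}` is `|K|` applied to the `y`-th column of `|K|^{∗n}`; hence
every column gains at most a factor `κ` in `L²` per step and `⦀K^{∗n}⦀_{2,0} ≤ κ^{n-1} ⦀K⦀_{2,0}`.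
The series bound is then the exponential series.
-/

section Schur

variable {α β : Type*} [MeasurableSpace α] [MeasurableSpace β] {μ : Measure α} {ν : Measure β}

theorem sq_eLpNorm_two (f : α → ℝ≥0∞) : eLpNorm f 2 μ ^ 2 = ∫⁻ a, f a ^ 2 ∂μ := by
  simpa [ENNReal.rpow_two] using
    eLpNorm_nnreal_pow_eq_lintegral (f := f) (μ := μ) (p := 2) two_ne_zero

theorem lintegral_mul_sq_le {w f : α → ℝ≥0∞} (hw : AEMeasurable w μ) (hf : AEMeasurable f μ) :
    (∫⁻ a, w a * f a ∂μ) ^ 2 ≤ (∫⁻ a, w a ∂μ) * ∫⁻ a, w a * f a ^ 2 ∂μ := by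
  have hsplit (a : α) : w a ^ (2⁻¹ : ℝ) * (w a * f a ^ 2) ^ (2⁻¹ : ℝ) = w a * f a := by
    rw [← ENNReal.mul_rpow_of_nonneg _ _ (by norm_num)]
    simpa [← mul_assoc, ← sq, ← mul_pow] using
      ENNReal.pow_rpow_inv_natCast (x := w a * f a) two_ne_zero
  have holder := ENNReal.lintegral_mul_norm_pow_le (g := fun a => w a * f a ^ 2) hw
    (hw.mul (hf.pow_const 2)) (by norm_num : (0:ℝ) ≤ 2⁻¹) (by norm_num : (0:ℝ) ≤ 2⁻¹) (by norm_num)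
  simp only [hsplit] at holder
  calc (∫⁻ a, w a * f a ∂μ) ^ 2
      ≤ ((∫⁻ a, w a ∂μ) ^ (2⁻¹ : ℝ) * (∫⁻ a, w a * f a ^ 2 ∂μ) ^ (2⁻¹ : ℝ)) ^ 2 := by gcongr
    _ = _ := by
      rw [← ENNReal.mul_rpow_of_nonneg _ _ (by norm_num), ← ENNReal.rpow_natCast,
        ← ENNReal.rpow_mul]
      norm_num

/-- Schur's test on `L²`: Cauchy–Schwarz against the row bound, then Tonelli against the column
bound. -/
theorem eLpNorm_lintegral_mul_le [SFinite μ] [SFinite ν] {M : α → β → ℝ≥0∞}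
    (hM : Measurable (Function.uncurry M)) {c : ℝ≥0∞}
    (hrow : ∀ᵐ x ∂μ, ∫⁻ z, M x z ∂ν ≤ c) (hcol : ∀ᵐ z ∂ν, ∫⁻ x, M x z ∂μ ≤ c)
    {f : β → ℝ≥0∞} (hf : Measurable f) :
    eLpNorm (fun x => ∫⁻ z, M x z * f z ∂ν) 2 μ ≤ c * eLpNorm f 2 ν := by
  rw [← ENNReal.pow_le_pow_left_iff two_ne_zero, mul_pow, sq_eLpNorm_two, sq_eLpNorm_two]
  have hMf : Measurable (Function.uncurry fun x z => M x z * f z ^ 2) :=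
    hM.mul ((hf.pow_const 2).comp measurable_snd)
  calc ∫⁻ x, (∫⁻ z, M x z * f z ∂ν) ^ 2 ∂μ
      ≤ ∫⁻ x, c * ∫⁻ z, M x z * f z ^ 2 ∂ν ∂μ := by
        refine lintegral_mono_ae ?_
        filter_upwards [hrow] with x hx
        refine (lintegral_mul_sq_le ?_ hf.aemeasurable).trans (by gcongr)
        exact (hM.comp measurable_prodMk_left).aemeasurable
    _ = c * ∫⁻ z, (∫⁻ x, M x z ∂μ) * f z ^ 2 ∂ν := by
        rw [lintegral_const_mul'' c hMf.lintegral_prod_right.aemeasurable,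
          lintegral_lintegral_swap hMf.aemeasurable]
        congr 1
        refine lintegral_congr fun z => ?_
        exact lintegral_mul_const'' _ (hM.comp measurable_prodMk_right).aemeasurable
    _ ≤ c * ∫⁻ z, c * f z ^ 2 ∂ν := by
        gcongr c * ?_
        refine lintegral_mono_ae ?_
        filter_upwards [hcol] with z hz
        gcongr
    _ = c ^ 2 * ∫⁻ z, f z ^ 2 ∂ν := by
        rw [lintegral_const_mul'' c (hf.pow_const 2).aemeasurable, ← mul_assoc, sq]

end Schur

section ENNRealKernel

variable {X : Type*} [MeasurableSpace X] {μ : Measure X}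

noncomputable def kConvE (μ : Measure X) (H K : X → X → ℝ≥0∞) : X → X → ℝ≥0∞ :=
  fun x y => ∫⁻ z, H x z * K z y ∂μ

noncomputable def convPowE (μ : Measure X) (K : X → X → ℝ≥0∞) : ℕ → X → X → ℝ≥0∞
  | 0 => K
  | n + 1 => kConvE μ (convPowE μ K n) K

theorem measurable_kConvE [SFinite μ] {H K : X → X → ℝ≥0∞}
    (hH : Measurable (Function.uncurry H)) (hK : Measurable (Function.uncurry K)) :
    Measurable (Function.uncurry (kConvE μ H K)) :=
  Measurable.lintegral_prod_right (f := fun (p : X × X) z => H p.1 z * K z p.2)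
    ((hH.comp (measurable_fst.fst.prodMk measurable_snd)).mul
      (hK.comp (measurable_snd.prodMk measurable_fst.snd)))

theorem measurable_convPowE [SFinite μ] {K : X → X → ℝ≥0∞}
    (hK : Measurable (Function.uncurry K)) (n : ℕ) :
    Measurable (Function.uncurry (convPowE μ K n)) := by
  induction n with
  | zero => exact hK
  | succ n ih => exact measurable_kConvE ih hK

theorem kConvE_assoc [SFinite μ] {L H K : X → X → ℝ≥0∞}
    (hL : Measurable (Function.uncurry L)) (hH : Measurable (Function.uncurry H))
    (hK : Measurable (Function.uncurry K)) :
    kConvE μ (kConvE μ L H) K = kConvE μ L (kConvE μ H K) := by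
  funext x y
  calc ∫⁻ z, (∫⁻ w, L x w * H w z ∂μ) * K z y ∂μ
      = ∫⁻ z, ∫⁻ w, L x w * (H w z * K z y) ∂μ ∂μ := by
        refine lintegral_congr fun z => ?_
        rw [← lintegral_mul_const'' (f := fun w => L x w * H w z) _
          ((hL.comp measurable_prodMk_left).mul (hH.comp measurable_prodMk_right)).aemeasurable]
        simp only [mul_assoc]
    _ = ∫⁻ w, ∫⁻ z, L x w * (H w z * K z y) ∂μ ∂μ :=
        lintegral_lintegral_swap ((hL.comp (measurable_const.prodMk measurable_snd)).mul
          ((hH.comp measurable_swap).mul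
            (hK.comp (measurable_fst.prodMk measurable_const)))).aemeasurable
    _ = ∫⁻ w, L x w * ∫⁻ z, H w z * K z y ∂μ ∂μ := by
        refine lintegral_congr fun w => ?_
        exact lintegral_const_mul'' _ ((hH.comp measurable_prodMk_left).mul
          (hK.comp measurable_prodMk_right)).aemeasurable

theorem convPowE_succ' [SFinite μ] {K : X → X → ℝ≥0∞} (hK : Measurable (Function.uncurry K))
    (n : ℕ) : convPowE μ K (n + 1) = kConvE μ K (convPowE μ K n) := by
  induction n with
  | zero => rfl
  | succ n ih =>
    calc convPowE μ K (n + 2) = kConvE μ (kConvE μ K (convPowE μ K n)) K :=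
          congrArg (kConvE μ · K) ih
      _ = kConvE μ K (convPowE μ K (n + 1)) := kConvE_assoc hK (measurable_convPowE hK n) hK

theorem eLpNorm_convPowE_le [SFinite μ] {K : X → X → ℝ≥0∞}
    (hK : Measurable (Function.uncurry K)) {c : ℝ≥0∞}
    (hrow : ∀ᵐ x ∂μ, ∫⁻ z, K x z ∂μ ≤ c) (hcol : ∀ᵐ z ∂μ, ∫⁻ x, K x z ∂μ ≤ c) (n : ℕ) (y : X) :
    eLpNorm (convPowE μ K n · y) 2 μ ≤ c ^ n * eLpNorm (K · y) 2 μ := by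
  induction n with
  | zero => simp [convPowE]
  | succ n ih =>
    rw [convPowE_succ' hK]
    calc eLpNorm (fun x => ∫⁻ z, K x z * convPowE μ K n z y ∂μ) 2 μ
        ≤ c * eLpNorm (convPowE μ K n · y) 2 μ :=
          eLpNorm_lintegral_mul_le hK hrow hcol
            ((measurable_convPowE hK n).comp measurable_prodMk_right)
      _ ≤ c ^ (n + 1) * eLpNorm (K · y) 2 μ := by
          rw [pow_succ', mul_assoc]
          gcongr

end ENNRealKernel

theorem enorm_convPow_le {X : Type} [MeasurableSpace X] (μ : Measure X) (K : X → X → ℂ)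
    (n : ℕ) (x y : X) : ‖convPow μ K n x y‖ₑ ≤ convPowE μ (fun a b => ‖K a b‖ₑ) n x y := by
  induction n generalizing x y with
  | zero => exact le_rfl
  | succ n ih =>
    calc ‖convPow μ K (n + 1) x y‖ₑ
        ≤ ∫⁻ z, ‖convPow μ K n x z * K z y‖ₑ ∂μ := enorm_integral_le_lintegral_enorm _
      _ ≤ ∫⁻ z, convPowE μ (fun a b => ‖K a b‖ₑ) n x z * ‖K z y‖ₑ ∂μ := by
          refine lintegral_mono fun z => ?_
          rw [enorm_mul]
          gcongr
          exact ih x z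

section KernelNorm

variable {X : Type} [MetricSpace X] [MeasurableSpace X] (μ : Measure X)

theorem kNorm_one_zero (L : X → X → ℂ) :
    kNorm μ 1 0 L = essSup (fun y => ∫⁻ x, ‖L x y‖ₑ ∂μ) μ := by
  simp [kNorm, kNormE, enorm_eq_nnnorm]

theorem kNorm_two_zero (L : X → X → ℂ) :
    kNorm μ 2 0 L = essSup (fun y => μ (ball y 1) ^ (2⁻¹ : ℝ) * eLpNorm (L · y) 2 μ) μ := by
  simp [kNorm, kNormE, eLpNorm_eq_lintegral_rpow_enorm_toReal, ENNReal.one_sub_inv_two,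
    enorm_eq_nnnorm]

theorem kNorm_two_zero_convPow_le [SFinite μ] {K : X → X → ℂ}
    (hK : Measurable (Function.uncurry K)) {c : ℝ≥0∞} (h10 : kNorm μ 1 0 K ≤ c)
    (h10s : kNorm μ 1 0 (fun x y => starRingEnd ℂ (K y x)) ≤ c) (n : ℕ) :
    kNorm μ 2 0 (convPow μ K n) ≤ c ^ n * kNorm μ 2 0 K := by
  have hcol : ∀ᵐ z ∂μ, ∫⁻ x, ‖K x z‖ₑ ∂μ ≤ c := by
    rw [kNorm_one_zero] at h10
    filter_upwards [ae_le_essSup (fun z => ∫⁻ x, ‖K x z‖ₑ ∂μ)] with z hz using hz.trans h10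
  have hrow : ∀ᵐ x ∂μ, ∫⁻ z, ‖K x z‖ₑ ∂μ ≤ c := by
    simp only [kNorm_one_zero, RCLike.enorm_conj] at h10s
    filter_upwards [ae_le_essSup (fun x => ∫⁻ z, ‖K x z‖ₑ ∂μ)] with x hx using hx.trans h10s
  have hcolumn (y : X) : eLpNorm (convPow μ K n · y) 2 μ ≤ c ^ n * eLpNorm (K · y) 2 μ :=
    calc eLpNorm (convPow μ K n · y) 2 μ
        ≤ eLpNorm (convPowE μ (fun a b => ‖K a b‖ₑ) n · y) 2 μ :=
          eLpNorm_mono_enorm fun x => by simpa using enorm_convPow_le μ K n x y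
      _ ≤ c ^ n * eLpNorm (K · y) 2 μ := by
          simpa using eLpNorm_convPowE_le hK.enorm hrow hcol n y
  rw [kNorm_two_zero, kNorm_two_zero, ← ENNReal.essSup_const_mul]
  refine essSup_mono_ae (Filter.Eventually.of_forall fun y => ?_)
  calc μ (ball y 1) ^ (2⁻¹ : ℝ) * eLpNorm (convPow μ K n · y) 2 μ
      ≤ μ (ball y 1) ^ (2⁻¹ : ℝ) * (c ^ n * eLpNorm (K · y) 2 μ) := by gcongr; exact hcolumn y
    _ = c ^ n * (μ (ball y 1) ^ (2⁻¹ : ℝ) * eLpNorm (K · y) 2 μ) := mul_left_comm _ _ _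

end KernelNorm

theorem sigmaFinite_of_measure_ball_lt_top {X : Type*} [PseudoMetricSpace X] [MeasurableSpace X]
    {μ : Measure X} (h : ∀ x r, μ (ball x r) < ∞) : SigmaFinite μ := by
  rcases isEmpty_or_nonempty X with hX | ⟨⟨x⟩⟩
  · infer_instance
  · exact ⟨⟨⟨fun n => ball x n, fun _ => trivial, fun n => h x n, iUnion_ball_nat x⟩⟩⟩

theorem tsum_ofReal_pow_succ_div_factorial {κ : ℝ} (hκ : 0 ≤ κ) :
    ∑' n : ℕ, ENNReal.ofReal (κ ^ (n + 1)) / ((n + 1).factorial : ℝ≥0∞) =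
      ENNReal.ofReal (Real.exp κ - 1) := by
  have hsum : Summable fun n : ℕ => κ ^ (n + 1) / (n + 1).factorial :=
    (summable_nat_add_iff 1).2 (Real.summable_pow_div_factorial κ)
  have hexp : Real.exp κ - 1 = ∑' n : ℕ, κ ^ (n + 1) / (n + 1).factorial := by
    rw [Real.exp_eq_exp_ℝ, NormedSpace.exp_eq_tsum_div]
    beta_reduce
    rw [(Real.summable_pow_div_factorial κ).tsum_eq_zero_add]
    simp
  rw [hexp, ENNReal.ofReal_tsum_of_nonneg (fun n => by positivity) hsum]
  refine tsum_congr fun n => ?_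
  rw [ENNReal.ofReal_div_of_pos (by positivity), ENNReal.ofReal_natCast]

theorem stmt8_general {X : Type} [MetricSpace X] [MeasurableSpace X] (μ : Measure X)
    (hball : ∀ (x : X) (r : ℝ), μ (ball x r) < ∞)
    (K : X → X → ℂ) (hKm : Measurable (Function.uncurry K)) (κ : ℝ) (hκ : 0 ≤ κ)
    (h10 : kNorm μ 1 0 K ≤ ENNReal.ofReal κ)
    (h10s : kNorm μ 1 0 (fun x y => starRingEnd ℂ (K y x)) ≤ ENNReal.ofReal κ)
    (h20 : kNorm μ 2 0 K ≤ ENNReal.ofReal κ) :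
    (∀ n : ℕ, kNorm μ 2 0 (convPow μ K n) ≤ ENNReal.ofReal (κ ^ (n + 1))) ∧
    ∑' n : ℕ, kNorm μ 2 0 (convPow μ K n) / (Nat.factorial (n + 1) : ℝ≥0∞) ≤
      ENNReal.ofReal (Real.exp κ - 1) := by
  have := sigmaFinite_of_measure_ball_lt_top hball
  have hpow (n : ℕ) : kNorm μ 2 0 (convPow μ K n) ≤ ENNReal.ofReal (κ ^ (n + 1)) :=
    calc kNorm μ 2 0 (convPow μ K n)
        ≤ ENNReal.ofReal κ ^ n * kNorm μ 2 0 K := kNorm_two_zero_convPow_le μ hKm h10 h10s n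
      _ ≤ ENNReal.ofReal κ ^ n * ENNReal.ofReal κ := mul_le_mul_right h20 _
      _ = ENNReal.ofReal (κ ^ (n + 1)) := by rw [← pow_succ, ENNReal.ofReal_pow hκ]
  refine ⟨hpow, ?_⟩
  calc ∑' n : ℕ, kNorm μ 2 0 (convPow μ K n) / (Nat.factorial (n + 1) : ℝ≥0∞)
      ≤ ∑' n : ℕ, ENNReal.ofReal (κ ^ (n + 1)) / (Nat.factorial (n + 1) : ℝ≥0∞) :=
        ENNReal.tsum_le_tsum fun n => by gcongr; exact hpow n
    _ = ENNReal.ofReal (Real.exp κ - 1) := tsum_ofReal_pow_succ_div_factorial hκ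

/-- If `⦀K⦀_{1,0}, ⦀K^*⦀_{1,0}, ⦀K⦀_{2,0} ≤ κ`, then `⦀K^{∗n}⦀_{2,0} ≤ κⁿ` for all `n ≥ 1`,
and `Σ_{n≥1} ⦀K^{∗n}⦀_{2,0}/n! ≤ e^κ − 1`. -/
theorem stmt8 {X : Type} [MetricSpace X] [MeasurableSpace X] [BorelSpace X] (μ : Measure X)
    (hball : ∀ (x : X) (r : ℝ), μ (ball x r) < ∞)
    (K : X → X → ℂ) (hKm : Measurable (Function.uncurry K)) (κ : ℝ) (hκ : 0 ≤ κ)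
    (h10 : kNorm μ 1 0 K ≤ ENNReal.ofReal κ)
    (h10s : kNorm μ 1 0 (fun x y => starRingEnd ℂ (K y x)) ≤ ENNReal.ofReal κ)
    (h20 : kNorm μ 2 0 K ≤ ENNReal.ofReal κ) :
    (∀ n : ℕ, kNorm μ 2 0 (convPow μ K n) ≤ ENNReal.ofReal (κ ^ (n + 1))) ∧
    ∑' n : ℕ, kNorm μ 2 0 (convPow μ K n) / (Nat.factorial (n + 1) : ℝ≥0∞) ≤
      ENNReal.ofReal (Real.exp κ - 1) :=
  stmt8_general μ hball K hKm κ hκ h10 h10s h20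
end
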